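/- (Theorem 2 for the alternative ambiguity set.) Assume N ≥ |𝓜| + 1 and 1 ≤ k ≤ N, and let 𝔾 be a nonempty set of Borel probability measures on valuations. Define the alternative ambiguity set 𝔽̂ = {F : Fₙ ∈ 𝔾 for every bidder n}. Then inf_{F∈𝔽̂} E_F[Rᵏ_𝓜(v)] ≥ inf_{F∈𝔽̂} V_𝓜(F) − (k−1)·|𝓜|·v̄/N. -/

import Mathlib

open MeasureTheory
open scoped ENNReal BigOperators

namespace RankGuaranteedAuctions

/-- A bundle of items, where the set of items is `Fin M`. -/
abbrev Bundle (M : ℕ) := Finset (Fin M)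

/-- A valuation assigns a real value to every bundle. -/
abbrev Valuation (M : ℕ) := Bundle M → ℝ

/-- A valuation is normalized: value `0` for the empty bundle and values in `[0, vbar]`. -/
def IsValuation (M : ℕ) (vbar : ℝ) (v : Valuation M) : Prop :=
  v ∅ = 0 ∧ ∀ b : Bundle M, 0 ≤ v b ∧ v b ≤ vbar

/-- A menu is a nonempty collection of nonempty bundles. -/
def IsMenu (M : ℕ) (Menu : Finset (Bundle M)) : Prop :=
  Menu.Nonempty ∧ ∅ ∉ Menu

/-- The complete menu `2^S` of all nonempty bundles. -/
noncomputable def completeMenu (M : ℕ) : Finset (Bundle M) :=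
  Finset.univ.erase ∅

/-- A feasible allocation: a set of pairwise disjoint bundles from the menu. -/
def Feasible (M : ℕ) (Menu X : Finset (Bundle M)) : Prop :=
  X ⊆ Menu ∧ ∀ b ∈ X, ∀ b' ∈ X, b ≠ b' → Disjoint b b'

/-- The maximum of `∑ b ∈ X, f b` over feasible allocations `X` from the menu. -/
noncomputable def maxAlloc (M : ℕ) (Menu : Finset (Bundle M)) (f : Bundle M → ℝ) : ℝ :=
  sSup {y : ℝ | ∃ X : Finset (Bundle M), Feasible M Menu X ∧ y = ∑ b ∈ X, f b}

/-- The `k`-th highest value among `w 0, …, w (N-1)` (for `1 ≤ k ≤ N`):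
the maximum over sets `T` of `k` bidders of the minimum of `w` on `T`. -/
noncomputable def kthHighest (N : ℕ) (w : Fin N → ℝ) (k : ℕ) : ℝ :=
  sSup {x : ℝ | ∃ T : Finset (Fin N), T.card = k ∧ x = sInf (w '' (T : Set (Fin N)))}

/-- The `k`-th rank guarantee `R^k_𝓜(v)`. -/
noncomputable def rankGuarantee (M N : ℕ) (Menu : Finset (Bundle M))
    (v : Fin N → Valuation M) (k : ℕ) : ℝ :=
  maxAlloc M Menu fun b => kthHighest N (fun n => v n b) k

/-- The ex-post efficient surplus: the maximum over feasible allocations `X` with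
`|X| ≤ N` and injective assignments `ι` of bundles in `X` to bidders of the total value. -/
noncomputable def surplusEx (M N : ℕ) (Menu : Finset (Bundle M))
    (v : Fin N → Valuation M) : ℝ :=
  sSup {y : ℝ | ∃ X : Finset (Bundle M), Feasible M Menu X ∧ X.card ≤ N ∧
    ∃ ι : Bundle M → Fin N, Set.InjOn ι ↑X ∧ y = ∑ b ∈ X, v (ι b) b}

/-- The average `F̄ = (1/N) ∑ₙ Fₙ` of the bidder-marginals of `F`. -/
noncomputable def avgMarginal (M N : ℕ) (F : Measure (Fin N → Valuation M)) :
    Measure (Valuation M) :=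
  (N : ℝ≥0∞)⁻¹ • ∑ n : Fin N, F.map (fun v => v n)

/-- The ex-ante efficient surplus `V_𝓜(F)`. -/
noncomputable def Vsurplus (M N : ℕ) (Menu : Finset (Bundle M))
    (F : Measure (Fin N → Valuation M)) : ℝ :=
  ∫ v, surplusEx M N Menu v ∂F

/-- A Borel probability measure on valuation profiles (supported on profiles of
valuations bounded by `vbar`). -/
def ProfileOK (M N : ℕ) (vbar : ℝ) (F : Measure (Fin N → Valuation M)) : Prop :=
  IsProbabilityMeasure F ∧ F {v | ∀ n, IsValuation M vbar (v n)} = 1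

/-- A Borel probability measure on valuations (supported on valuations bounded by `vbar`). -/
def ValOK (M : ℕ) (vbar : ℝ) (G : Measure (Valuation M)) : Prop :=
  IsProbabilityMeasure G ∧ G {w | IsValuation M vbar w} = 1

/-- `κ` is a partition of the bundle `b` into nonempty, pairwise disjoint parts. -/
def IsPartitionOf (M : ℕ) (κ : Finset (Bundle M)) (b : Bundle M) : Prop :=
  (∀ c ∈ κ, c ≠ ∅) ∧ (∀ c ∈ κ, ∀ c' ∈ κ, c ≠ c' → Disjoint c c') ∧ κ.sup id = b

/-- Feasibility for homogeneous goods: total number of allocated items is at most `M`. -/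
def FeasibleQ (M : ℕ) (Menu X : Finset (Bundle M)) : Prop :=
  X ⊆ Menu ∧ ∑ b ∈ X, b.card ≤ M

/-- The maximum of `∑ b ∈ X, f b` over homogeneous-goods-feasible allocations `X`. -/
noncomputable def maxAllocQ (M : ℕ) (Menu : Finset (Bundle M)) (f : Bundle M → ℝ) : ℝ :=
  sSup {y : ℝ | ∃ X : Finset (Bundle M), FeasibleQ M Menu X ∧ y = ∑ b ∈ X, f b}

/-- An assignment of pairwise disjoint bundles to the `N` bidders. -/
def IsAssignment (M N : ℕ) (a : Fin N → Bundle M) : Prop :=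
  ∀ n n' : Fin N, n ≠ n' → Disjoint (a n) (a n')

/-- An assignment is efficient if it maximizes total value over all assignments. -/
def IsEfficient (M N : ℕ) (v : Fin N → Valuation M) (a : Fin N → Bundle M) : Prop :=
  IsAssignment M N a ∧
    ∀ a' : Fin N → Bundle M, IsAssignment M N a' → ∑ n, v n (a' n) ≤ ∑ n, v n (a n)

/-- The VCG revenue at the efficient assignment `a`: the sum over bidders `n` of
`max_{assignments to bidders other than n} ∑_{n' ≠ n} v^{n'} − ∑_{n' ≠ n} v^{n'}(a n')`. -/
noncomputable def vcgRevenue (M N : ℕ) (v : Fin N → Valuation M)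
    (a : Fin N → Bundle M) : ℝ :=
  ∑ n : Fin N,
    (sSup {y : ℝ | ∃ a' : Fin N → Bundle M, IsAssignment M N a' ∧ a' n = ∅ ∧
        y = ∑ n' ∈ Finset.univ.erase n, v n' (a' n')}
      - ∑ n' ∈ Finset.univ.erase n, v n' (a n'))

/-- An unbounded valuation: value `0` for the empty bundle and nonnegative values. -/
def IsValuationNN (M : ℕ) (v : Valuation M) : Prop :=
  v ∅ = 0 ∧ ∀ b : Bundle M, 0 ≤ v b

/-- The top-`(k-1)/N` quantile of `v b` under `G`. -/
noncomputable def quantileQ (M N k : ℕ) (G : Measure (Valuation M)) (b : Bundle M) : ℝ :=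
  sInf {q : ℝ | 0 ≤ q ∧ G {w | q < w b} ≤ ((k - 1 : ℕ) : ℝ≥0∞) / (N : ℝ≥0∞)}

/-! For each bidder `n` fix an allocation `Xₙ` that is optimal for `vⁿ` alone. Replacing `vⁿ_b` by
the `k`-th highest value `v⁽ᵏ⁾_b` on `Xₙ` costs at most `v̄` for each pair `(b, n)` with
`vⁿ_b > v⁽ᵏ⁾_b`, and each bundle has fewer than `k` such bidders. Since `Xₙ` is feasible for the
`k`-th rank guarantee, `∑ₙ max_X vⁿ(X) ≤ N · Rᵏ_𝓜(v) + (k - 1)|𝓜| v̄` pointwise. Taking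
expectations, `E_F[Rᵏ_𝓜] + (k - 1)|𝓜| v̄ / N` is at least `E_{Fₙ}[max_X vⁿ(X)]` for some bidder `n`.
That number is the ex-ante surplus of the profile in which all bidders share one valuation drawn
from `Fₙ`: it lies in the ambiguity set, and as `N ≥ |𝓜|` every bundle can go to its own bidder. -/

open Finset

lemma csInf_image_finset_mem {ι β : Type*} [ConditionallyCompleteLinearOrder β] (w : ι → β)
    {T : Finset ι} (hT : T.Nonempty) : sInf (w '' ↑T) ∈ w '' ↑T :=
  ((coe_nonempty.2 hT).image w).csInf_mem (Set.toFinite _)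

section Allocation

variable {M : ℕ} (Menu : Finset (Bundle M))

lemma maxAlloc_eq_sSup_image (f : Bundle M → ℝ) :
    maxAlloc M Menu f = sSup ((fun X => ∑ b ∈ X, f b) '' {X | Feasible M Menu X}) := by
  unfold maxAlloc; congr 1; ext; simp [eq_comm]

lemma feasible_empty : Feasible M Menu ∅ := ⟨empty_subset _, by simp⟩

lemma le_maxAlloc {X : Finset (Bundle M)} (f : Bundle M → ℝ) (hX : Feasible M Menu X) :
    ∑ b ∈ X, f b ≤ maxAlloc M Menu f := by
  rw [maxAlloc_eq_sSup_image]
  exact le_csSup ((Set.toFinite _).image _).bddAbove ⟨X, hX, rfl⟩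

lemma maxAlloc_nonneg (f : Bundle M → ℝ) : 0 ≤ maxAlloc M Menu f := by
  simpa using le_maxAlloc Menu f (feasible_empty Menu)

lemma exists_feasible_maxAlloc_eq (f : Bundle M → ℝ) :
    ∃ X, Feasible M Menu X ∧ maxAlloc M Menu f = ∑ b ∈ X, f b := by
  rw [maxAlloc_eq_sSup_image]
  obtain ⟨X, hX, hsum⟩ := Set.Nonempty.csSup_mem
    (s := (fun X => ∑ b ∈ X, f b) '' {X | Feasible M Menu X})
    ⟨_, Set.mem_image_of_mem _ (feasible_empty Menu)⟩ ((Set.toFinite _).image _)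
  exact ⟨X, hX, hsum.symm⟩

lemma maxAlloc_le_card_mul {f : Bundle M → ℝ} {c : ℝ} (hc : 0 ≤ c) (hf : ∀ b, f b ≤ c) :
    maxAlloc M Menu f ≤ #Menu * c := by
  obtain ⟨X, hX, hsum⟩ := exists_feasible_maxAlloc_eq Menu f
  calc maxAlloc M Menu f = ∑ b ∈ X, f b := hsum
    _ ≤ #X * c := by simpa using sum_le_sum fun b _ => hf b
    _ ≤ #Menu * c := by gcongr; exact hX.1

@[fun_prop]
lemma measurable_maxAlloc : Measurable (maxAlloc M Menu) := by
  simp_rw [funext (maxAlloc_eq_sSup_image Menu), sSup_image']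
  exact .iSup fun X => measurable_sum _ fun b _ => measurable_pi_apply b

end Allocation

section KthHighest

variable {N k : ℕ} (w : Fin N → ℝ)

lemma kthHighest_eq_sSup_image :
    kthHighest N w k = sSup ((fun T : Finset (Fin N) => sInf (w '' ↑T)) '' {T | #T = k}) := by
  unfold kthHighest; congr 1; ext; simp [eq_comm]

lemma le_kthHighest {T : Finset (Fin N)} (hT : #T = k) : sInf (w '' ↑T) ≤ kthHighest N w k := by
  rw [kthHighest_eq_sSup_image]
  exact le_csSup ((Set.toFinite _).image _).bddAbove ⟨T, hT, rfl⟩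

lemma kthHighest_mem_range (hk : 1 ≤ k) (hkN : k ≤ N) : kthHighest N w k ∈ Set.range w := by
  obtain ⟨T₀, -, hT₀⟩ := exists_subset_card_eq (s := (univ : Finset (Fin N))) (by simpa)
  rw [kthHighest_eq_sSup_image]
  obtain ⟨T, hT, hsup⟩ := Set.Nonempty.csSup_mem
    (s := (fun T : Finset (Fin N) => sInf (w '' ↑T)) '' {T | #T = k})
    ⟨_, Set.mem_image_of_mem _ hT₀⟩ ((Set.toFinite _).image _)
  obtain ⟨n, -, hn⟩ := csInf_image_finset_mem w (card_pos.1 (hT.symm ▸ hk : 0 < #T))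
  exact ⟨n, hn.trans hsup⟩

lemma card_filter_kthHighest_lt_lt (hk : 1 ≤ k) : #{n | kthHighest N w k < w n} < k := by
  by_contra! hcard
  obtain ⟨T, hTsub, hT⟩ := exists_subset_card_eq hcard
  obtain ⟨n, hnT, hn⟩ := csInf_image_finset_mem w (card_pos.1 (hT.symm ▸ hk : 0 < #T))
  have hlt : kthHighest N w k < w n := (mem_filter.1 (hTsub hnT)).2
  exact (le_kthHighest w hT).not_gt (hn ▸ hlt)

lemma sum_ite_kthHighest_lt_le (hk : 1 ≤ k) {c : ℝ} (hc : 0 ≤ c) :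
    ∑ n, (if kthHighest N w k < w n then c else 0) ≤ (k - 1) * c := by
  rw [← sum_filter, sum_const, nsmul_eq_mul]
  gcongr
  have := card_filter_kthHighest_lt_lt w hk
  rw [le_sub_iff_add_le]
  exact_mod_cast this

@[fun_prop]
lemma measurable_kthHighest : Measurable fun w : Fin N → ℝ => kthHighest N w k := by
  simp_rw [kthHighest_eq_sSup_image, sSup_image', sInf_image']
  exact .iSup fun T => .iInf fun n => measurable_pi_apply _

end KthHighest

section Surplus

variable {M N : ℕ} (Menu : Finset (Bundle M))

lemma surplusEx_eq_sSup_image (v : Fin N → Valuation M) :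
    surplusEx M N Menu v = sSup ((fun p : Finset (Bundle M) × (Bundle M → Fin N) =>
      ∑ b ∈ p.1, v (p.2 b) b) '' {p | Feasible M Menu p.1 ∧ #p.1 ≤ N ∧ Set.InjOn p.2 ↑p.1}) := by
  unfold surplusEx; congr 1; ext y
  constructor
  · rintro ⟨X, hX, hXN, ι, hι, rfl⟩; exact ⟨(X, ι), ⟨hX, hXN, hι⟩, rfl⟩
  · rintro ⟨⟨X, ι⟩, ⟨hX, hXN, hι⟩, rfl⟩; exact ⟨X, hX, hXN, ι, hι, rfl⟩

lemma surplusEx_nonneg (hN : 0 < N) (v : Fin N → Valuation M) : 0 ≤ surplusEx M N Menu v := by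
  rw [surplusEx_eq_sSup_image]
  refine le_csSup ((Set.toFinite _).image _).bddAbove ⟨(∅, fun _ => ⟨0, hN⟩), ?_, by simp⟩
  exact ⟨feasible_empty Menu, by simp, by simp⟩

lemma surplusEx_const (hMenu : #Menu ≤ N) (hN : 0 < N) (w : Valuation M) :
    surplusEx M N Menu (fun _ => w) = maxAlloc M Menu w := by
  unfold surplusEx maxAlloc
  congr 1; ext y
  refine ⟨fun ⟨X, hX, _, _, _, hy⟩ => ⟨X, hX, hy⟩, fun ⟨X, hX, hy⟩ => ?_⟩
  have hXN : #X ≤ N := (card_le_card hX.1).trans hMenu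
  let ι : Bundle M → Fin N := fun b =>
    if hb : b ∈ X then Fin.castLE hXN (X.equivFin ⟨b, hb⟩) else ⟨0, hN⟩
  refine ⟨X, hX, hXN, ι, fun a ha b hb hab => ?_, hy⟩
  simp only [ι, dif_pos (mem_coe.1 ha), dif_pos (mem_coe.1 hb)] at hab
  exact congrArg Subtype.val (X.equivFin.injective (Fin.castLE_injective hXN hab))

lemma measurable_surplusEx : Measurable (surplusEx M N Menu) := by
  simp_rw [funext (surplusEx_eq_sSup_image Menu), sSup_image']
  exact .iSup fun p => measurable_sum _ fun b _ => by fun_prop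

@[fun_prop]
lemma measurable_rankGuarantee (k : ℕ) :
    Measurable fun v : Fin N → Valuation M => rankGuarantee M N Menu v k := by
  unfold rankGuarantee; fun_prop

end Surplus

lemma sum_maxAlloc_le_rankGuarantee {M N k : ℕ} {vbar : ℝ} (hvbar : 0 ≤ vbar)
    (Menu : Finset (Bundle M)) (hk : 1 ≤ k) (hkN : k ≤ N) (v : Fin N → Valuation M)
    (hv : ∀ n, IsValuation M vbar (v n)) :
    ∑ n, maxAlloc M Menu (v n) ≤ N * rankGuarantee M N Menu v k + (k - 1) * #Menu * vbar := by
  set K : Bundle M → ℝ := fun b => kthHighest N (fun n => v n b) k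
  have hK : ∀ b, 0 ≤ K b := fun b => by
    obtain ⟨n, hn⟩ := kthHighest_mem_range (fun n => v n b) hk hkN
    exact ((hv n).2 b).1.trans_eq hn
  have hvK : ∀ n b, v n b ≤ K b + if K b < v n b then vbar else 0 := fun n b => by
    split_ifs with h
    · linarith [((hv n).2 b).2, hK b]
    · linarith
  choose X hX hXsum using fun n => exists_feasible_maxAlloc_eq Menu (v n)
  calc ∑ n, maxAlloc M Menu (v n)
      ≤ ∑ n, ∑ b ∈ X n, (K b + if K b < v n b then vbar else 0) := by
        simp_rw [hXsum]; gcongr with n _ b; exact hvK n b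
    _ = ∑ n, ∑ b ∈ X n, K b + ∑ n, ∑ b ∈ X n, (if K b < v n b then vbar else 0) := by
        simp_rw [sum_add_distrib]
    _ ≤ ∑ _n : Fin N, rankGuarantee M N Menu v k
          + ∑ n, ∑ b ∈ Menu, (if K b < v n b then vbar else 0) := by
        gcongr with n _
        · exact le_maxAlloc Menu K (hX n)
        · exact (hX n).1
    _ ≤ N * rankGuarantee M N Menu v k + ∑ _b ∈ Menu, (k - 1) * vbar := by
        rw [sum_comm]; gcongr with b
        · simp
        · exact sum_ite_kthHighest_lt_le (fun n => v n b) hk hvbar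
    _ = N * rankGuarantee M N Menu v k + (k - 1) * #Menu * vbar := by
        rw [sum_const, nsmul_eq_mul]; ring

section Profiles

variable {M N : ℕ} {vbar : ℝ}

lemma measurableSet_isValuation : MeasurableSet {w : Valuation M | IsValuation M vbar w} := by
  unfold IsValuation; measurability

lemma ProfileOK.ae_isValuation {F : Measure (Fin N → Valuation M)} (hF : ProfileOK M N vbar F) :
    ∀ᵐ v ∂F, ∀ n, IsValuation M vbar (v n) := by
  have := hF.1
  have hmeas : MeasurableSet {v : Fin N → Valuation M | ∀ n, IsValuation M vbar (v n)} := by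
    rw [Set.ofPred_forall]
    exact .iInter fun n => measurableSet_isValuation.preimage (measurable_pi_apply n)
  rw [ae_iff_measure_eq hmeas.nullMeasurableSet, hF.2, measure_univ]

end Profiles

lemma sum_integral_maxAlloc_map_le {M N k : ℕ} {vbar : ℝ} (hvbar : 0 ≤ vbar)
    (Menu : Finset (Bundle M)) (hk : 1 ≤ k) (hkN : k ≤ N) {F : Measure (Fin N → Valuation M)}
    (hF : ProfileOK M N vbar F) :
    ∑ n, ∫ w, maxAlloc M Menu w ∂F.map (fun v => v n)
      ≤ N * ∫ v, rankGuarantee M N Menu v k ∂F + (k - 1) * #Menu * vbar := by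
  have := hF.1
  have hae := hF.ae_isValuation
  have hbound : ∀ {f : Bundle M → ℝ}, (∀ b, f b ≤ vbar) → ‖maxAlloc M Menu f‖ ≤ #Menu * vbar :=
    fun hf => (Real.norm_of_nonneg (maxAlloc_nonneg Menu _)).trans_le
      (maxAlloc_le_card_mul Menu hvbar hf)
  have hint_alloc : ∀ n, Integrable (fun v : Fin N → Valuation M => maxAlloc M Menu (v n)) F :=
    fun n => .of_bound
      ((measurable_maxAlloc Menu).comp (measurable_pi_apply n)).aestronglyMeasurable _
      (hae.mono fun v hv => hbound fun b => ((hv n).2 b).2)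
  have hint_rank : Integrable (fun v => rankGuarantee M N Menu v k) F :=
    .of_bound (measurable_rankGuarantee Menu k).aestronglyMeasurable _
      (hae.mono fun v hv => hbound fun b => by
        obtain ⟨n, hn⟩ := kthHighest_mem_range (fun n => v n b) hk hkN
        exact hn ▸ ((hv n).2 b).2)
  calc ∑ n, ∫ w, maxAlloc M Menu w ∂F.map (fun v => v n)
      = ∫ v, ∑ n, maxAlloc M Menu (v n) ∂F := by
        rw [integral_finsetSum _ fun n _ => hint_alloc n]
        exact sum_congr rfl fun n _ => integral_map (measurable_pi_apply n).aemeasurable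
          (measurable_maxAlloc Menu).aestronglyMeasurable
    _ ≤ ∫ v, (N * rankGuarantee M N Menu v k + (k - 1) * #Menu * vbar) ∂F :=
        integral_mono_ae (integrable_finsetSum _ fun n _ => hint_alloc n)
          ((hint_rank.const_mul _).add (integrable_const _))
          (hae.mono (sum_maxAlloc_le_rankGuarantee hvbar Menu hk hkN))
    _ = N * ∫ v, rankGuarantee M N Menu v k ∂F + (k - 1) * #Menu * vbar := by
        rw [integral_add (hint_rank.const_mul _) (integrable_const _), integral_const_mul]
        simp

section DiagonalProfile

variable {ι α : Type*} [MeasurableSpace α]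

noncomputable def diagonalProfile (G : Measure α) : Measure (ι → α) :=
  G.map fun w _ => w

lemma map_eval_diagonalProfile (G : Measure α) (i : ι) :
    (diagonalProfile G).map (fun v => v i) = G := by
  rw [diagonalProfile, Measure.map_map (measurable_pi_apply i) (by fun_prop)]
  exact Measure.map_id

lemma profileOK_diagonalProfile {M N : ℕ} {vbar : ℝ} {G : Measure (Valuation M)}
    (hG : ValOK M vbar G) : ProfileOK M N vbar (diagonalProfile G) := by
  have := hG.1
  have hdiag : Measurable fun (w : Valuation M) (_ : Fin N) => w := by fun_prop
  have : IsProbabilityMeasure (diagonalProfile G : Measure (Fin N → Valuation M)) :=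
    Measure.isProbabilityMeasure_map hdiag.aemeasurable
  refine ⟨this, le_antisymm prob_le_one ?_⟩
  rw [← hG.2, diagonalProfile]
  exact (measure_mono fun w hw _ => hw).trans (Measure.le_map_apply hdiag.aemeasurable _)

lemma Vsurplus_diagonalProfile {M N : ℕ} {Menu : Finset (Bundle M)} (hMenu : #Menu ≤ N)
    (hN : 0 < N) (G : Measure (Valuation M)) :
    Vsurplus M N Menu (diagonalProfile G) = ∫ w, maxAlloc M Menu w ∂G := by
  rw [Vsurplus, diagonalProfile, integral_map (by fun_prop)
    (measurable_surplusEx Menu).aestronglyMeasurable]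
  simp_rw [surplusEx_const Menu hMenu hN]

end DiagonalProfile

theorem maxmin_rank_guarantee_bound_marginal_ambiguity_general
    (M N : ℕ) (vbar : ℝ) (hvbar : 0 ≤ vbar)
    (Menu : Finset (Bundle M))
    (hN : Menu.card + 1 ≤ N) (k : ℕ) (hk1 : 1 ≤ k) (hkN : k ≤ N)
    (GG : Set (Measure (Valuation M))) (hGGne : GG.Nonempty)
    (hGG : ∀ G ∈ GG, ValOK M vbar G) :
    sInf ((fun F => ∫ v, rankGuarantee M N Menu v k ∂F) ''
        {F : Measure (Fin N → Valuation M) |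
          ProfileOK M N vbar F ∧ ∀ n : Fin N, F.map (fun v => v n) ∈ GG}) ≥
      sInf ((fun F => Vsurplus M N Menu F) ''
        {F : Measure (Fin N → Valuation M) |
          ProfileOK M N vbar F ∧ ∀ n : Fin N, F.map (fun v => v n) ∈ GG})
        - ((k : ℝ) - 1) * (Menu.card : ℝ) * vbar / (N : ℝ) := by
  set S := {F : Measure (Fin N → Valuation M) |
    ProfileOK M N vbar F ∧ ∀ n : Fin N, F.map (fun v => v n) ∈ GG}
  have hN₀ : 0 < N := by omega
  have hdiag : ∀ G ∈ GG, diagonalProfile G ∈ S := fun G hG =>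
    ⟨profileOK_diagonalProfile (hGG G hG), fun n => (map_eval_diagonalProfile G n).symm ▸ hG⟩
  have hVbdd : BddBelow ((fun F => Vsurplus M N Menu F) '' S) :=
    ⟨0, Set.forall_mem_image.2 fun F _ => integral_nonneg (surplusEx_nonneg Menu hN₀)⟩
  obtain ⟨G, hG⟩ := hGGne
  refine le_csInf ((Set.nonempty_of_mem (hdiag G hG)).image _) ?_
  rintro _ ⟨F, ⟨hF, hFGG⟩, rfl⟩
  set a := fun n => ∫ w, maxAlloc M Menu w ∂F.map (fun v => v n)
  obtain ⟨n₀, -, hn₀⟩ := exists_min_image univ a ⟨⟨0, hN₀⟩, mem_univ _⟩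
  have hVa : sInf ((fun F => Vsurplus M N Menu F) '' S) ≤ a n₀ :=
    calc _ ≤ Vsurplus M N Menu (diagonalProfile (F.map fun v => v n₀)) :=
          csInf_le hVbdd ⟨_, hdiag _ (hFGG n₀), rfl⟩
      _ = a n₀ := Vsurplus_diagonalProfile (by omega) hN₀ _
  have hNa : N * a n₀ ≤ ∑ n, a n := by
    simpa using card_nsmul_le_sum univ a _ fun n _ => hn₀ n (mem_univ n)
  have hsum := sum_integral_maxAlloc_map_le hvbar Menu hk1 hkN hF
  dsimp only
  rw [sub_le_comm, le_div_iff₀ (by positivity)]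
  nlinarith

/-- Theorem 2 for the alternative ambiguity set
`𝔽̂ = {F : Fₙ ∈ 𝔾 for every bidder n}`: with `N ≥ |𝓜| + 1` and `1 ≤ k ≤ N`,
`inf_{F∈𝔽̂} E_F[R^k_𝓜(v)] ≥ inf_{F∈𝔽̂} V_𝓜(F) − (k−1)·|𝓜|·v̄/N`. -/
theorem maxmin_rank_guarantee_bound_marginal_ambiguity
    (M N : ℕ) (hM : 1 ≤ M) (vbar : ℝ) (hvbar : 0 ≤ vbar)
    (Menu : Finset (Bundle M)) (hMenu : IsMenu M Menu)
    (hN : Menu.card + 1 ≤ N) (k : ℕ) (hk1 : 1 ≤ k) (hkN : k ≤ N)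
    (GG : Set (Measure (Valuation M))) (hGGne : GG.Nonempty)
    (hGG : ∀ G ∈ GG, ValOK M vbar G) :
    sInf ((fun F => ∫ v, rankGuarantee M N Menu v k ∂F) ''
        {F : Measure (Fin N → Valuation M) |
          ProfileOK M N vbar F ∧ ∀ n : Fin N, F.map (fun v => v n) ∈ GG}) ≥
      sInf ((fun F => Vsurplus M N Menu F) ''
        {F : Measure (Fin N → Valuation M) |
          ProfileOK M N vbar F ∧ ∀ n : Fin N, F.map (fun v => v n) ∈ GG})
        - ((k : ℝ) - 1) * (Menu.card : ℝ) * vbar / (N : ℝ) :=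
  maxmin_rank_guarantee_bound_marginal_ambiguity_general M N vbar hvbar Menu hN k hk1 hkN GG hGGne
    hGG

end RankGuaranteedAuctions
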